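/- arXiv:math/0401105 — 6 statements merged into one kernel-verified Lean document; each statement's English description precedes it below -/
import Mathlib

section
/- Let R be a ring and V a cochain complex of R-modules equipped with an increasing filtration by subcomplexes 0 = F₀V ⊆ F₁V ⊆ F₂V ⊆ ⋯ which is exhaustive (V = ⋃_i F_iV). Assume that for each i ≥ 1 the quotient complex Gr_iV = F_iV/F_{i-1}V is K-projective, and that for each i the inclusion F_{i-1}V ⊆ F_iV splits in every degree, i.e. F_iV ≅ F_{i-1}V ⊕ Gr_iV as graded R-modules. Then V is K-projective. -/
/-!
A null-homotopy is built one filtration step at a time. Given `g : F_{i+1}V ⟶ Z` whose restriction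
to `F_iV` has a null-homotopy `H`, precompose `H` with degreewise retractions to get `s`; then
`g - (ds + sd)` vanishes on `F_iV`, so it factors through `Gr_{i+1}V` and is null-homotopic there.
The resulting compatible null-homotopies glue, because in each degree `V` is the filtered colimit
(the increasing union) of the `F_iV`.
-/

open CategoryTheory Limits

/-- A cochain complex of `R`-modules is K-projective if every morphism from it to an
acyclic complex is homotopic to zero. -/
def KProjective {R : Type*} [Ring R] (P : CochainComplex (ModuleCat R) ℤ) : Prop :=
  ∀ Z : CochainComplex (ModuleCat R) ℤ, (∀ i : ℤ, Z.ExactAt i) →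
    ∀ f : P ⟶ Z, Nonempty (Homotopy f 0)

namespace Homotopy

variable {C : Type*} [Category C] [Preadditive C] {I : Type*} {c : ComplexShape I}
  {A B Z : HomologicalComplex C c}

theorem eq_nullHomotopicMap {f : A ⟶ B} (H : Homotopy f 0) : f = nullHomotopicMap H.hom := by
  ext a
  rw [H.comm a, HomologicalComplex.zero_f_apply, add_zero]
  rfl

theorem exists_extension_of_split (i : A ⟶ B) [HasCokernel i]
    (hsplit : ∀ k, ∃ r : B.X k ⟶ A.X k, i.f k ≫ r = 𝟙 (A.X k))
    (hcok : ∀ g : cokernel i ⟶ Z, Nonempty (Homotopy g 0))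
    {f : A ⟶ Z} (H : Homotopy f 0) (g : B ⟶ Z) (hg : i ≫ g = f) :
    ∃ H' : Homotopy g 0, ∀ a b, i.f a ≫ H'.hom a b = H.hom a b := by
  choose r hr using hsplit
  let s : ∀ a b, B.X a ⟶ Z.X b := fun a b => r a ≫ H.hom a b
  have hs : ∀ a b, i.f a ≫ s a b = H.hom a b := fun a b => by simp [s, reassoc_of% hr]
  have hker : i ≫ (g - nullHomotopicMap s) = 0 := by
    rw [Preadditive.comp_sub, comp_nullHomotopicMap, funext₂ hs, hg, sub_eq_zero]
    exact H.eq_nullHomotopicMap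
  obtain ⟨Hcok⟩ := hcok (cokernel.desc i _ hker)
  have hg_decomp : g = cokernel.π i ≫ cokernel.desc i _ hker + nullHomotopicMap s := by
    simp
  have hs_zero : ∀ a b, ¬c.Rel b a → s a b = 0 := fun a b hab => by simp [s, H.zero a b hab]
  refine ⟨(ofEq hg_decomp).trans (((Hcok.compLeft _).add (nullHomotopy s hs_zero)).trans
    (ofEq (by simp))), fun a b => ?_⟩
  have hπ : i.f a ≫ (cokernel.π i).f a = 0 := by
    rw [← HomologicalComplex.comp_f, cokernel.condition, HomologicalComplex.zero_f_apply]
  simp [reassoc_of% hπ, hs]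

theorem exists_compatible_family_of_split {F : ℕ → HomologicalComplex C c}
    (ι : ∀ i, F i ⟶ F (i + 1)) [∀ i, HasCokernel (ι i)]
    (hsplit : ∀ i k, ∃ r : (F (i + 1)).X k ⟶ (F i).X k, (ι i).f k ≫ r = 𝟙 ((F i).X k))
    (hcok : ∀ i (g : cokernel (ι i) ⟶ Z), Nonempty (Homotopy g 0))
    (hzero : IsZero (F 0)) (f : ∀ i, F i ⟶ Z) (hf : ∀ i, ι i ≫ f (i + 1) = f i) :
    ∃ H : ∀ i, Homotopy (f i) 0, ∀ (i i' : ℕ) (φ : i ⟶ i') a b,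
      ((Functor.ofSequence ι).map φ).f a ≫ (H i').hom a b = (H i).hom a b := by
  choose extend hextend using fun i (H : Homotopy (f i) 0) =>
    exists_extension_of_split (ι i) (hsplit i) (hcok i) H (f (i + 1)) (hf i)
  let H : ∀ i, Homotopy (f i) 0 := fun i =>
    Nat.rec (motive := fun i => Homotopy (f i) 0) (Homotopy.ofEq (hzero.eq_of_src _ _)) extend i
  refine ⟨H, fun i i' φ a b => ?_⟩
  let hom :
      Functor.ofSequence ι ⋙ HomologicalComplex.eval C c a ⟶ (Functor.const ℕ).obj (Z.X b) :=
    NatTrans.ofSequence (fun i => (H i).hom a b) fun i => by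
      simp only [Functor.comp_map, Functor.ofSequence_map_homOfLE_succ, Functor.const_obj_map]
      exact (hextend i (H i) a b).trans (Category.comp_id _).symm
  exact (hom.naturality φ).trans (Category.comp_id _)

section Colimit

variable {J : Type*} [Category J] {G : J ⥤ HomologicalComplex C c} {s : Cocone G}
  (hs : ∀ a, IsColimit ((HomologicalComplex.eval C c a).mapCocone s))

noncomputable def descFamily (h : ∀ k a b, (G.obj k).X a ⟶ Z.X b)
    (hh : ∀ (k k' : J) (φ : k ⟶ k') a b, (G.map φ).f a ≫ h k' a b = h k a b) (a b : I) :
    s.pt.X a ⟶ Z.X b :=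
  (hs a).desc ⟨Z.X b,
    { app k := h k a b, naturality k k' φ := (hh k k' φ a b).trans (Category.comp_id _).symm }⟩

@[simp]
theorem ι_descFamily (h : ∀ k a b, (G.obj k).X a ⟶ Z.X b)
    (hh : ∀ (k k' : J) (φ : k ⟶ k') a b, (G.map φ).f a ≫ h k' a b = h k a b)
    (k : J) (a b : I) :
    (s.ι.app k).f a ≫ descFamily hs h hh a b = h k a b :=
  (hs a).fac _ k

include hs in
theorem hom_ext_of_isColimitEval {a : I} {X : C} {u v : s.pt.X a ⟶ X}
    (h : ∀ k, (s.ι.app k).f a ≫ u = (s.ι.app k).f a ≫ v) : u = v :=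
  (hs a).hom_ext h

noncomputable def ofIsColimitEval {f : s.pt ⟶ Z} (H : ∀ k, Homotopy (s.ι.app k ≫ f) 0)
    (hH : ∀ (k k' : J) (φ : k ⟶ k') a b, (G.map φ).f a ≫ (H k').hom a b = (H k).hom a b) :
    Homotopy f 0 where
  hom := descFamily hs (fun k => (H k).hom) hH
  zero a b hab := hom_ext_of_isColimitEval hs fun k => by simpa using (H k).zero a b hab
  comm a := hom_ext_of_isColimitEval hs fun k => by
    simp only [Preadditive.comp_add, ← dNext_comp_left, ← prevD_comp_left, ι_descFamily]
    simpa using (H k).comm a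

end Colimit

end Homotopy

namespace ModuleCat

variable {R : Type*} [Ring R] {J : Type*} [Category J] {G : J ⥤ ModuleCat R} (c : Cocone G)

theorem range_ι_app_le {k k' : J} (f : k ⟶ k') :
    (LinearMap.range (c.ι.app k).hom : Submodule R c.pt) ≤
      LinearMap.range (c.ι.app k').hom := by
  rw [← c.w f, ModuleCat.hom_comp]
  exact LinearMap.range_comp_le_range _ _

variable [IsFiltered J]

theorem exists_eq_ι_of_iSup_range_eq_top
    (htop : ⨆ k, (LinearMap.range (c.ι.app k).hom : Submodule R c.pt) = ⊤) (x₁ x₂ : c.pt) :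
    ∃ k y₁ y₂, c.ι.app k y₁ = x₁ ∧ c.ι.app k y₂ = x₂ := by
  have hdir : Directed (· ≤ ·) fun k => (LinearMap.range (c.ι.app k).hom : Submodule R c.pt) :=
    fun k k' => ⟨IsFiltered.max k k', range_ι_app_le c (IsFiltered.leftToMax k k'),
      range_ι_app_le c (IsFiltered.rightToMax k k')⟩
  have : Nonempty J := IsFiltered.nonempty
  have hmem : ∀ x, x ∈ ⨆ k, (LinearMap.range (c.ι.app k).hom : Submodule R c.pt) :=
    fun x => htop ▸ Submodule.mem_top
  obtain ⟨k₁, y₁, rfl⟩ := (Submodule.mem_iSup_of_directed _ hdir).1 (hmem x₁)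
  obtain ⟨k₂, y₂, rfl⟩ := (Submodule.mem_iSup_of_directed _ hdir).1 (hmem x₂)
  refine ⟨IsFiltered.max k₁ k₂, G.map (IsFiltered.leftToMax k₁ k₂) y₁,
    G.map (IsFiltered.rightToMax k₁ k₂) y₂, ?_, ?_⟩ <;>
    simp [← ConcreteCategory.comp_apply]

/- Built from the colimit of underlying types rather than via `isColimitOfReflects`, since
`forget (ModuleCat R)` is only known to preserve filtered colimits when the module universe
matches that of `R`. -/
noncomputable def isColimitOfMonoOfISupRangeEqTop (hmono : ∀ k, Mono (c.ι.app k))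
    (htop : ⨆ k, (LinearMap.range (c.ι.app k).hom : Submodule R c.pt) = ⊤) : IsColimit c :=
  let t : IsColimit ((forget _).mapCocone c) := Types.FilteredColimit.isColimitOf' _ _
    (fun x => by
      obtain ⟨k, y, -, hy, -⟩ := exists_eq_ι_of_iSup_range_eq_top c htop x x
      exact ⟨k, y, hy.symm⟩)
    (fun k x y hxy => ⟨k, 𝟙 k, by
      rw [(ModuleCat.mono_iff_injective _).1 (hmono k) hxy]⟩)
  have ht : ∀ (s : Cocone G) k y, t.desc ((forget _).mapCocone s) (c.ι.app k y) = s.ι.app k y :=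
    fun s k y => ConcreteCategory.congr_hom (t.fac ((forget _).mapCocone s) k) y
  { desc s := ofHom
      { toFun := t.desc ((forget _).mapCocone s)
        map_add' x₁ x₂ := by
          obtain ⟨k, y₁, y₂, rfl, rfl⟩ := exists_eq_ι_of_iSup_range_eq_top c htop x₁ x₂
          simp only [← map_add, ht]
        map_smul' r x := by
          obtain ⟨k, y, -, rfl, -⟩ := exists_eq_ι_of_iSup_range_eq_top c htop x x
          simp only [← map_smul, ht, RingHom.id_apply] }
    fac s k := by ext y; exact ht s k y
    uniq s m hm := by
      ext x
      obtain ⟨k, y, -, rfl, -⟩ := exists_eq_ι_of_iSup_range_eq_top c htop x x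
      simp [← hm k, ht] }

end ModuleCat

/-- Theorem 1.3: a cochain complex with an exhaustive increasing filtration
`0 = F₀V ⊆ F₁V ⊆ ⋯` by subcomplexes, which splits degreewise and whose graded pieces
`Gr_iV = F_iV/F_{i-1}V` are K-projective, is itself K-projective. -/
theorem K_projective_of_filtration {R : Type*} [Ring R]
    (V : CochainComplex (ModuleCat R) ℤ)
    -- the filtration, given as a chain of subcomplexes of `V`:
    (F : ℕ → CochainComplex (ModuleCat R) ℤ)
    (ι : ∀ i : ℕ, F i ⟶ F (i + 1))
    (j : ∀ i : ℕ, F i ⟶ V)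
    (hcomm : ∀ i : ℕ, ι i ≫ j (i + 1) = j i)
    (hmono : ∀ i : ℕ, Mono (j i))
    -- `F₀V = 0`:
    (hzero : IsZero (F 0))
    -- the filtration is exhaustive:
    (hexh : ∀ k : ℤ, (⨆ i : ℕ, LinearMap.range ((j i).f k).hom) = ⊤)
    -- the inclusions split in every degree (as graded modules `F_{i+1}V ≅ F_iV ⊕ Gr_{i+1}V`):
    (hsplit : ∀ (i : ℕ) (k : ℤ), ∃ r : (F (i + 1)).X k ⟶ (F i).X k, (ι i).f k ≫ r = 𝟙 ((F i).X k))
    -- the graded pieces `Gr_{i+1}V = F_{i+1}V / F_iV` are K-projective: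
    (hGr : ∀ i : ℕ, KProjective (cokernel (ι i))) :
    KProjective V := by
  intro Z hZ f
  obtain ⟨H, hH⟩ := Homotopy.exists_compatible_family_of_split ι hsplit (fun i => hGr i Z hZ)
    hzero (fun i => j i ≫ f) (fun i => by rw [← Category.assoc, hcomm])
  let s : Cocone (Functor.ofSequence ι) :=
    ⟨V, NatTrans.ofSequence j fun i => by
      simp only [Functor.ofSequence_map_homOfLE_succ, Functor.const_obj_map]
      exact (hcomm i).trans (Category.comp_id _).symm⟩
  have hs : ∀ a, IsColimit ((HomologicalComplex.eval _ _ a).mapCocone s) := fun a =>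
    ModuleCat.isColimitOfMonoOfISupRangeEqTop _
      (fun i => have := hmono i; inferInstanceAs (Mono ((j i).f a))) (hexh a)
  exact ⟨Homotopy.ofIsColimitEval hs H hH⟩
end

section
/- Let C be a triangulated category, S an S-system in C, and Q : C → C[S⁻¹] the localization functor. Then for an object N of C the following are equivalent: (i) Q(N) is isomorphic to 0; (ii) for every distinguished triangle X →^f Y → N → T(X), the morphism f lies in S; (iii) there exists a distinguished triangle X →^f Y → N → T(X) with f ∈ S. -/
open CategoryTheory Limits Pretriangulated ZeroObject

universe v u

variable {C : Type u} [Category.{v} C] [HasZeroObject C] [HasShift C ℤ] [Preadditive C]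
  [∀ n : ℤ, (shiftFunctor C n).Additive] [Pretriangulated C]

/-- A null system in a triangulated category: it contains `0`, is stable under the
translation and its inverse, is closed under cones of morphisms between its objects,
and contains the direct summands of all of its objects. -/
structure IsNullSystem (N : Set C) : Prop where
  zero : (0 : C) ∈ N
  shift : ∀ X : C, X ∈ N ↔ (X⟦(1 : ℤ)⟧ ∈ N)
  tri : ∀ T : Triangle C, (T ∈ distTriang C) → T.obj₁ ∈ N → T.obj₂ ∈ N → T.obj₃ ∈ N
  summand : ∀ (X Y : C) (b : BinaryBicone X Y), b.IsBilimit → b.pt ∈ N → X ∈ N ∧ Y ∈ N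

/-- An S-system in a triangulated category: a localizing class (multiplicative system
with a calculus of left and of right fractions) compatible with the triangulation
(stable under shifts, and commutative squares between distinguished triangles with
vertical morphisms in `S` can be completed by a third morphism in `S`) and saturated
(`s ∈ S` iff the localization functor `Q` sends `s` to an isomorphism). -/
class SSystem (S : MorphismProperty C) : Prop where
  left : S.HasLeftCalculusOfFractions
  right : S.HasRightCalculusOfFractions
  compat : S.IsCompatibleWithTriangulation
  saturated : ∀ ⦃X Y : C⦄ (f : X ⟶ Y), S f ↔ IsIso (S.Q.map f)

instance (S : MorphismProperty C) [h : SSystem S] : S.HasLeftCalculusOfFractions := h.left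
instance (S : MorphismProperty C) [h : SSystem S] : S.HasRightCalculusOfFractions := h.right
instance (S : MorphismProperty C) [h : SSystem S] : S.IsCompatibleWithTriangulation := h.compat

/-- `S(N)`: the class of morphisms `f` admitting a distinguished triangle over `f`
whose cone lies in `N`. -/
def coneClass (N : Set C) : MorphismProperty C := fun X Y f =>
  ∃ (Z : C) (g : Y ⟶ Z) (h : Z ⟶ X⟦(1 : ℤ)⟧),
    (Triangle.mk f g h ∈ distTriang C) ∧ Z ∈ N
/-- A1.1.6: for an S-system `S` with localization functor `Q`, and an object `N`, the
following are equivalent: (i) `Q(N) ≅ 0`; (ii) for every distinguished triangle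
`X ⟶ Y ⟶ N ⟶ T(X)` the first morphism is in `S`; (iii) there exists such a
distinguished triangle with first morphism in `S`. -/
theorem isZero_localization_tfae (S : MorphismProperty C) [SSystem S] (N : C) :
    List.TFAE [
      IsZero (S.Q.obj N),
      ∀ (X Y : C) (f : X ⟶ Y) (g : Y ⟶ N) (h : N ⟶ X⟦(1 : ℤ)⟧),
        (Triangle.mk f g h ∈ distTriang C) → S f,
      ∃ (X Y : C) (f : X ⟶ Y) (g : Y ⟶ N) (h : N ⟶ X⟦(1 : ℤ)⟧),
        (Triangle.mk f g h ∈ distTriang C) ∧ S f] := by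
  tfae_have 1 → 2 := by
    intro h1 X Y f g h hT
    have hQT := S.Q.map_distinguished _ hT
    rw [SSystem.saturated (S := S) f]
    exact ((S.Q.mapTriangle.obj (Triangle.mk f g h)).isZero₃_iff_isIso₁ hQT).1 h1
  tfae_have 2 → 3 := by
    intro h2
    have hT := inv_rot_of_distTriang _ (contractible_distinguished N)
    set T := (contractibleTriangle N).invRotate with hTdef
    exact ⟨T.obj₁, T.obj₂, T.mor₁, T.mor₂, T.mor₃, hT, h2 _ _ T.mor₁ T.mor₂ T.mor₃ hT⟩
  tfae_have 3 → 1 := by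
    rintro ⟨X, Y, f, g, h, hT, hf⟩
    have hQT := S.Q.map_distinguished _ hT
    have : IsIso (S.Q.map f) := (SSystem.saturated f).1 hf
    exact ((S.Q.mapTriangle.obj (Triangle.mk f g h)).isZero₃_iff_isIso₁ hQT).2 this
  tfae_finish
end

section
/- Let C be a triangulated category, S an S-system in C, and Q : C → C[S⁻¹] the localization functor. Then the class N(S) of S-acyclic objects, i.e. objects X of C with Q(X) isomorphic to 0, is a null system in C. -/
open CategoryTheory Limits Pretriangulated ZeroObject

universe v u

variable {C : Type u} [Category.{v} C] [HasZeroObject C] [HasShift C ℤ] [Preadditive C]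
  [∀ n : ℤ, (shiftFunctor C n).Additive] [Pretriangulated C]

/-- A1.1.7: for an S-system `S`, the class `N(S)` of `S`-acyclic objects (objects sent
to zero objects by the localization functor) is a null system. -/
theorem acyclics_isNullSystem (S : MorphismProperty C) [SSystem S] :
    IsNullSystem {X : C | IsZero (S.Q.obj X)} := by
  have hsh : ∀ (X : C), IsZero (S.Q.obj X) ↔ IsZero (S.Q.obj (X⟦(1 : ℤ)⟧)) := by
    intro X
    have e : S.Q.obj (X⟦(1 : ℤ)⟧) ≅ (S.Q.obj X)⟦(1 : ℤ)⟧ := (S.Q.commShiftIso (1 : ℤ)).app X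
    constructor
    · intro h
      exact ((shiftFunctor S.Localization (1 : ℤ)).map_isZero h).of_iso e
    · intro h
      exact ((shiftFunctor S.Localization (-1 : ℤ)).map_isZero
        (h.of_iso e.symm)).of_iso (shiftShiftNeg (S.Q.obj X) (1 : ℤ)).symm
  constructor
  · exact S.Q.map_isZero (isZero_zero C)
  · exact hsh
  · intro T hT h1 h2
    have hT' : S.Q.mapTriangle.obj T ∈ distTriang S.Localization :=
      S.Q.map_distinguished T hT
    have : IsIso (S.Q.mapTriangle.obj T).mor₁ :=
      ⟨(h2.iso h1).hom, h1.eq_of_src _ _, h2.eq_of_src _ _⟩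
    exact Triangle.isZero₃_of_isIso₁ _ hT' this
  · intro X Y b hb hpt
    constructor
    · rw [Set.mem_setOf_eq, IsZero.iff_id_eq_zero]
      have : 𝟙 (S.Q.obj X) = S.Q.map (b.inl ≫ b.fst) := by rw [b.inl_fst]; simp
      rw [this, S.Q.map_comp, hpt.eq_of_tgt (S.Q.map b.inl) 0, zero_comp]
    · rw [Set.mem_setOf_eq, IsZero.iff_id_eq_zero]
      have : 𝟙 (S.Q.obj Y) = S.Q.map (b.inr ≫ b.snd) := by rw [b.inr_snd]; simp
      rw [this, S.Q.map_comp, hpt.eq_of_tgt (S.Q.map b.inr) 0, zero_comp]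
end

section
/- Let C be a triangulated category. The assignments N ↦ S(N) (the class of morphisms whose cone lies in N) and S ↦ N(S) (the class of objects sent to zero objects by the localization functor Q : C → C[S⁻¹]) are mutually inverse bijections between the null systems in C and the S-systems in C; that is, N(S(N)) = N for every null system N, and S(N(S)) = S for every S-system S. -/
open CategoryTheory Limits Pretriangulated ZeroObject

universe v u

variable {C : Type u} [Category.{v} C] [HasZeroObject C] [HasShift C ℤ] [Preadditive C]
  [∀ n : ℤ, (shiftFunctor C n).Additive] [Pretriangulated C]

/-! Without the octahedral axiom `S(N)` need not be closed under composition, so we work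
with its multiplicative closure `W`, which has the same localization. The class `S(N)` satisfies
the left Ore condition and left cancellability, hence `W` admits a calculus of left fractions;
then `Q(X) ≅ 0` iff some `s : X ⟶ Z` in `W` is zero. Such a zero composite `s = τ ≫ w` with
`w ∈ S(N)` factors through an object of `N`, and the triangle on `w` transfers this property
to `τ`; at the end of the chain `𝟙 X` factors through `N`, so `X` is a direct summand of an
object of `N`. Conversely, for an S-system the localization is triangulated and a morphism
is inverted exactly when its cone is killed. -/

open Category Preadditive

namespace CategoryTheory.MorphismProperty

variable {C' : Type u} [Category.{v} C'] {W : MorphismProperty C'}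

lemma IsInvertedBy.multiplicativeClosure {D : Type*} [Category* D] {F : C' ⥤ D}
    (hF : W.IsInvertedBy F) : W.multiplicativeClosure.IsInvertedBy F :=
  (multiplicativeClosure_le_iff W ((isomorphisms D).inverseImage F)).2 hF

variable (W) in
instance q_isLocalization_multiplicativeClosure : W.Q.IsLocalization W.multiplicativeClosure := by
  have h (E : Type u) [Category.{max u v} E] :
      Localization.StrictUniversalPropertyFixedTarget W.Q W.multiplicativeClosure E :=
    { inverts := W.Q_inverts.multiplicativeClosure
      lift F hF := Localization.Construction.lift F (hF.of_le _ _ _ W.le_multiplicativeClosure)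
      fac _ _ := Localization.Construction.fac _ _
      uniq := Localization.Construction.uniq }
  exact Functor.IsLocalization.mk' _ _ (h _) (h _)

lemma hasLeftCalculusOfFractions_multiplicativeClosure
    (ore : ∀ ⦃X X' Y : C'⦄ (s : X ⟶ X') (_ : W s) (u : X ⟶ Y),
      ∃ (Y' : C') (s' : Y ⟶ Y') (u' : X' ⟶ Y'), W s' ∧ u ≫ s' = s ≫ u')
    (ext : ∀ ⦃X' X Y : C'⦄ (f₁ f₂ : X ⟶ Y) (s : X' ⟶ X) (_ : W s) (_ : s ≫ f₁ = s ≫ f₂),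
      ∃ (Y' : C') (t : Y ⟶ Y') (_ : W t), f₁ ≫ t = f₂ ≫ t) :
    W.multiplicativeClosure.HasLeftCalculusOfFractions where
  exists_leftFraction X Y φ := by
    obtain ⟨s, hs, u⟩ := φ
    suffices ∃ (Y' : C') (s' : Y ⟶ Y') (u' : X ⟶ Y'),
        W.multiplicativeClosure s' ∧ u ≫ s' = s ≫ u' by
      obtain ⟨Y', s', u', hs', h⟩ := this
      exact ⟨⟨u', s', hs'⟩, h⟩
    induction hs with
    | of s hs => exact (ore s hs u).imp fun _ ⟨s', u', hs', h⟩ => ⟨s', u', .of _ hs', h⟩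
    | id => exact ⟨Y, 𝟙 Y, u, .id Y, by simp⟩
    | comp_of s₀ w _ hw ih =>
      obtain ⟨Y₀, s₀', u₀', hs₀', h₀⟩ := ih u
      obtain ⟨Y₁, s₁, u₁, hs₁, h₁⟩ := ore w hw u₀'
      exact ⟨Y₁, s₀' ≫ s₁, u₁, W.multiplicativeClosure.comp_mem _ _ hs₀' (.of _ hs₁),
        by rw [reassoc_of% h₀, h₁, assoc]⟩
  ext X' X Y f₁ f₂ s hs hf := by
    induction hs with
    | of s hs => exact (ext f₁ f₂ s hs hf).imp fun _ ⟨t, ht, h⟩ => ⟨t, .of _ ht, h⟩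
    | id => exact ⟨Y, 𝟙 Y, .id Y, by simpa using hf⟩
    | comp_of s₀ w _ hw ih =>
      obtain ⟨Y₀, t₀, ht₀, h₀⟩ := ih (w ≫ f₁) (w ≫ f₂) (by simpa using hf)
      obtain ⟨Y₁, t₁, ht₁, h₁⟩ := ext (f₁ ≫ t₀) (f₂ ≫ t₀) w hw (by simpa using h₀)
      exact ⟨Y₁, t₀ ≫ t₁, W.multiplicativeClosure.comp_mem _ _ ht₀ (.of _ ht₁), by simpa using h₁⟩

end CategoryTheory.MorphismProperty

namespace CategoryTheory.Localization

lemma isZero_obj_iff {C' D : Type*} [Category* C'] [Category* D] [Preadditive C']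
    (L : C' ⥤ D) (W : MorphismProperty C') [L.IsLocalization W] [W.HasLeftCalculusOfFractions]
    (X : C') : IsZero (L.obj X) ↔ ∃ Z, W (0 : X ⟶ Z) := by
  let := preadditive L W
  have := functor_additive L W
  rw [IsZero.iff_id_eq_zero, ← L.map_id, ← L.map_zero, MorphismProperty.map_eq_iff_postcomp L W]
  simp only [id_comp, zero_comp]
  constructor
  · rintro ⟨Z, s, hs, rfl⟩; exact ⟨Z, hs⟩
  · rintro ⟨Z, hZ⟩; exact ⟨Z, 0, hZ, rfl⟩

end CategoryTheory.Localization

def FactorsThroughSet (N : Set C) {X Y : C} (f : X ⟶ Y) : Prop :=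
  ∃ P ∈ N, ∃ (a : X ⟶ P) (b : P ⟶ Y), a ≫ b = f

lemma coneClass_ore (N : Set C) {X X' Y : C} (s : X ⟶ X') (hs : coneClass N s) (u : X ⟶ Y) :
    ∃ (Y' : C) (s' : Y ⟶ Y') (u' : X' ⟶ Y'), coneClass N s' ∧ u ≫ s' = s ≫ u' := by
  obtain ⟨Z, g, h, hT, hZ⟩ := hs
  obtain ⟨Y', s', g', hT'⟩ := distinguished_cocone_triangle₂ (h ≫ u⟦(1 : ℤ)⟧')
  obtain ⟨u', hu', -⟩ := complete_distinguished_triangle_morphism₂ _ _ hT hT' u (𝟙 Z)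
    (id_comp _).symm
  exact ⟨Y', s', u', ⟨Z, g', _, hT', hZ⟩, hu'.symm⟩

namespace IsNullSystem

variable {N : Set C} (hN : IsNullSystem N)
include hN

lemma mem_of_iso {X Y : C} (e : X ≅ Y) (hX : X ∈ N) : Y ∈ N := by
  let b : BinaryBicone Y (0 : C) :=
    { pt := X
      fst := e.hom
      snd := 0
      inl := e.inv
      inr := 0
      inr_snd := (isZero_zero C).eq_of_src _ _ }
  exact (hN.summand Y 0 b (isBinaryBilimitOfTotal b (by simp [b])) hX).1

lemma shift_mem {X : C} (hX : X ∈ N) : X⟦(1 : ℤ)⟧ ∈ N := (hN.shift X).1 hX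

lemma shift_neg_mem {X : C} (hX : X ∈ N) : X⟦(-1 : ℤ)⟧ ∈ N :=
  (hN.shift _).2 (hN.mem_of_iso ((shiftEquiv C (1 : ℤ)).counitIso.app X).symm hX)

lemma obj₁_mem {T : Triangle C} (hT : T ∈ distTriang C) (h₂ : T.obj₂ ∈ N) (h₃ : T.obj₃ ∈ N) :
    T.obj₁ ∈ N :=
  (hN.shift _).2 (hN.tri _ (rot_of_distTriang _ hT) h₂ h₃)

lemma obj₂_mem {T : Triangle C} (hT : T ∈ distTriang C) (h₁ : T.obj₁ ∈ N) (h₃ : T.obj₃ ∈ N) :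
    T.obj₂ ∈ N :=
  hN.tri _ (inv_rot_of_distTriang _ hT) (hN.shift_neg_mem h₃) h₁

lemma biprod_mem {X Y : C} (hX : X ∈ N) (hY : Y ∈ N) : (X ⊞ Y : C) ∈ N :=
  hN.obj₂_mem (binaryBiproductTriangle_distinguished X Y) hX hY

lemma mem_of_retract {X Y : C} (h : Retract X Y) (hY : Y ∈ N) : X ∈ N := by
  obtain ⟨Z, g, δ, hT⟩ := distinguished_cocone_triangle h.i
  obtain ⟨e, -⟩ := exists_iso_binaryBiproduct_of_distTriang _ hT
    (Triangle.mor₃_eq_zero_of_mono₁ _ hT (inferInstanceAs (Mono h.i)))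
  exact (hN.summand _ _ _ (BinaryBiproduct.isBilimit X Z) (hN.mem_of_iso e hY)).1

lemma zero_mem_coneClass {X : C} (hX : X ∈ N) : coneClass N (0 : X ⟶ 0) :=
  ⟨_, _, _, rot_of_distTriang _ (contractible_distinguished X), hN.shift_mem hX⟩

lemma coneClass_ext {X' X Y : C} (f₁ f₂ : X ⟶ Y) (s : X' ⟶ X) (hs : coneClass N s)
    (hf : s ≫ f₁ = s ≫ f₂) : ∃ (Y' : C) (t : Y ⟶ Y') (_ : coneClass N t), f₁ ≫ t = f₂ ≫ t := by
  obtain ⟨Z, g, h, hT, hZ⟩ := hs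
  obtain ⟨q : Z ⟶ Y, hq : f₁ - f₂ = g ≫ q⟩ := Triangle.yoneda_exact₂ _ hT (f₁ - f₂) (by
    change s ≫ (f₁ - f₂) = 0
    rw [comp_sub, hf, sub_self])
  obtain ⟨Y', t, δ, hT'⟩ := distinguished_cocone_triangle q
  refine ⟨Y', t, ⟨_, _, _, rot_of_distTriang _ hT', hN.shift_mem hZ⟩, ?_⟩
  have hqt : q ≫ t = 0 := comp_distTriang_mor_zero₁₂ _ hT'
  rw [← sub_eq_zero, ← sub_comp, hq, assoc, hqt, comp_zero]

lemma factorsThroughSet_of_comp {X B Y : C} (τ : X ⟶ B) (w : B ⟶ Y) (hw : coneClass N w)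
    (hτw : FactorsThroughSet N (τ ≫ w)) : FactorsThroughSet N τ := by
  obtain ⟨Z, p, δ, hT, hZ⟩ := hw
  obtain ⟨P, hP, h, q, hhq⟩ := hτw
  have hwp : w ≫ p = 0 := comp_distTriang_mor_zero₁₂ _ hT
  obtain ⟨M, m, g, hM⟩ := distinguished_cocone_triangle₁ (q ≫ p)
  obtain ⟨a : M ⟶ B, ha : m ≫ q = a ≫ w, -⟩ :=
    complete_distinguished_triangle_morphism₁ _ _ hM hT q (𝟙 Z) (comp_id _)
  obtain ⟨ι : X ⟶ M, rfl : h = ι ≫ m⟩ := Triangle.coyoneda_exact₂ _ hM h (by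
    change h ≫ q ≫ p = 0
    rw [← assoc, hhq, assoc, hwp, comp_zero])
  -- `τ - ι ≫ a` kills `w`, so it factors through the fibre `Z⟦-1⟧` of `w`.
  let e : Z⟦(-1 : ℤ)⟧ ⟶ B := (Triangle.mk w p δ).invRotate.mor₁
  obtain ⟨c : X ⟶ Z⟦(-1 : ℤ)⟧, hc : τ - ι ≫ a = c ≫ e⟩ :=
    Triangle.coyoneda_exact₂ _ (inv_rot_of_distTriang _ hT) (τ - ι ≫ a) (by
    change (τ - ι ≫ a) ≫ w = 0
    rw [sub_comp, assoc, ← ha, ← assoc, ← hhq, sub_self])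
  refine ⟨Z⟦(-1 : ℤ)⟧ ⊞ M, hN.biprod_mem (hN.shift_neg_mem hZ) (hN.obj₁_mem hM hP hZ),
    biprod.lift c ι, biprod.desc e a, ?_⟩
  rw [biprod.lift_desc, ← hc, sub_add_cancel]

lemma hasLeftCalculusOfFractions_multiplicativeClosure_coneClass :
    (coneClass N).multiplicativeClosure.HasLeftCalculusOfFractions :=
  MorphismProperty.hasLeftCalculusOfFractions_multiplicativeClosure
    (fun _ _ _ => coneClass_ore N) (fun _ _ _ => hN.coneClass_ext)

lemma mem_of_factorsThroughSet_id {X : C} (hX : FactorsThroughSet N (𝟙 X)) : X ∈ N := by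
  obtain ⟨P, hP, i, r, h⟩ := hX
  exact hN.mem_of_retract ⟨i, r, h⟩ hP

lemma mem_of_factorsThroughSet {X Y : C} {s : X ⟶ Y}
    (hs : (coneClass N).multiplicativeClosure s) (hsN : FactorsThroughSet N s) : X ∈ N := by
  induction hs with
  | of w hw =>
    exact hN.mem_of_factorsThroughSet_id
      (hN.factorsThroughSet_of_comp (𝟙 _) w hw (by rwa [id_comp]))
  | id => exact hN.mem_of_factorsThroughSet_id hsN
  | comp_of τ w _ hw ih => exact ih (hN.factorsThroughSet_of_comp τ w hw hsN)

theorem setOf_isZero_Q_obj_coneClass : {X : C | IsZero ((coneClass N).Q.obj X)} = N := by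
  have := hN.hasLeftCalculusOfFractions_multiplicativeClosure_coneClass
  ext X
  rw [Set.mem_ofPred_eq, Localization.isZero_obj_iff _ (coneClass N).multiplicativeClosure]
  constructor
  · rintro ⟨Z, hZ⟩
    exact hN.mem_of_factorsThroughSet hZ ⟨0, hN.zero, 0, 0, comp_zero⟩
  · intro hX
    exact ⟨0, .of _ (hN.zero_mem_coneClass hX)⟩

end IsNullSystem

theorem coneClass_setOf_isZero_obj_iff {D : Type*} [Category* D] [HasZeroObject D] [HasShift D ℤ]
    [Preadditive D] [∀ n : ℤ, (shiftFunctor D n).Additive] [Pretriangulated D] (F : C ⥤ D)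
    [F.CommShift ℤ] [F.IsTriangulated] {X Y : C} (f : X ⟶ Y) :
    coneClass {X : C | IsZero (F.obj X)} f ↔ IsIso (F.map f) := by
  constructor
  · rintro ⟨Z, g, h, hT, hZ⟩
    exact ((F.mapTriangle.obj (Triangle.mk f g h)).isZero₃_iff_isIso₁
      (F.map_distinguished _ hT)).1 hZ
  · intro hf
    obtain ⟨Z, g, h, hT⟩ := distinguished_cocone_triangle f
    exact ⟨Z, g, h, hT, Triangle.isZero₃_of_isIso₁ _ (F.map_distinguished _ hT) hf⟩

/-- A1.1.8: `N ↦ S(N)` and `S ↦ N(S)` are mutually inverse bijections between null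
systems and S-systems in a triangulated category. -/
theorem nullSystem_sSystem_bijection :
    (∀ N : Set C, IsNullSystem N → {X : C | IsZero ((coneClass N).Q.obj X)} = N) ∧
    (∀ S : MorphismProperty C, SSystem S → coneClass {X : C | IsZero (S.Q.obj X)} = S) := by
  refine ⟨fun N hN => hN.setOf_isZero_Q_obj_coneClass, fun S _ => ?_⟩
  ext X Y f
  exact (coneClass_setOf_isZero_obj_iff S.Q f).trans (SSystem.saturated f).symm
end

section
/- Let C be a triangulated category, S an S-system in C with corresponding null system N of S-acyclic objects, and D a full triangulated subcategory of C. Let S_D = S ∩ Hom(D) be the induced S-system on D, and suppose D satisfies (b_R): for every X ∈ C there exists a morphism s : X → M in S with M ∈ D, or (b_L): for every X ∈ C there exists a morphism s : M → X in S with M ∈ D. Then the natural functor Ψ : D[S_D⁻¹] → C[S⁻¹] is fully faithful, its essential image is a triangulated subcategory of C[S⁻¹], and Ψ is an equivalence of categories whose quasi-inverses are all exact. -/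
open CategoryTheory Limits Pretriangulated ZeroObject

universe v u

variable {C : Type u} [Category.{v} C] [HasZeroObject C] [HasShift C ℤ] [Preadditive C]
  [∀ n : ℤ, (shiftFunctor C n).Additive] [Pretriangulated C]

/-- A full triangulated subcategory, described by its class of objects: it contains `0`,
is additive (closed under direct sums), stable under the translation and its inverse, and
contains a cone of every morphism between its objects, up to isomorphism. -/
structure IsTriangulatedSubcategory (Dsub : Set C) : Prop where
  zero : (0 : C) ∈ Dsub
  sum : ∀ (X Y : C) (b : BinaryBicone X Y), b.IsBilimit → X ∈ Dsub → Y ∈ Dsub → b.pt ∈ Dsub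
  shift : ∀ X ∈ Dsub, X⟦(1 : ℤ)⟧ ∈ Dsub
  unshift : ∀ X ∈ Dsub, X⟦(-1 : ℤ)⟧ ∈ Dsub
  cone : ∀ T : Triangle C, (T ∈ distTriang C) → T.obj₁ ∈ Dsub → T.obj₂ ∈ Dsub →
    ∃ Z ∈ Dsub, Nonempty (T.obj₃ ≅ Z)

universe v₂ u₂

variable {D : Type u₂} [Category.{v₂} D] [HasZeroObject D] [HasShift D ℤ] [Preadditive D]
  [∀ n : ℤ, (shiftFunctor D n).Additive] [Pretriangulated D]

/-- A functor between triangulated categories is exact if it commutes with the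
translation functors and preserves distinguished triangles. -/
def IsExactFunctor (F : C ⥤ D) : Prop :=
  ∃ cs : F.CommShift ℤ, haveI := cs; F.IsTriangulated

/-- `(RF, ε)` is a right derived functor of `F : C ⥤ D` relative to the S-system `S`:
`RF` is exact and `(RF, ε)` is universal among pairs of an exact functor
`G : C[S⁻¹] ⥤ D` with a morphism of functors `F ⟶ G ∘ Q`. -/
def IsRightDerivedFunctor (S : MorphismProperty C) [SSystem S]
    (F : C ⥤ D) (RF : S.Localization ⥤ D) (ε : F ⟶ S.Q ⋙ RF) : Prop :=
  IsExactFunctor RF ∧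
    ∀ (G : S.Localization ⥤ D), IsExactFunctor G → ∀ ε' : F ⟶ S.Q ⋙ G,
      ∃! η : RF ⟶ G, ε' = ε ≫ CategoryTheory.Functor.whiskerLeft S.Q η

/-- `(LF, ε)` is a left derived functor of `F : C ⥤ D` relative to the S-system `S`:
`LF` is exact and `(LF, ε)` is universal among pairs of an exact functor
`G : C[S⁻¹] ⥤ D` with a morphism of functors `G ∘ Q ⟶ F`. -/
def IsLeftDerivedFunctor (S : MorphismProperty C) [SSystem S]
    (F : C ⥤ D) (LF : S.Localization ⥤ D) (ε : S.Q ⋙ LF ⟶ F) : Prop :=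
  IsExactFunctor LF ∧
    ∀ (G : S.Localization ⥤ D), IsExactFunctor G → ∀ ε' : S.Q ⋙ G ⟶ F,
      ∃! η : G ⟶ LF, ε' = CategoryTheory.Functor.whiskerLeft S.Q η ≫ ε

/-!
Under (b_R) every object of `C` maps by a morphism of `S` to an object of `D`. Prolonging a left
fraction `X ⟶ Y' ⟵ Y` between objects of `D` by such a morphism `Y' ⟶ M` turns it into an
equivalent fraction lying in `D`, and the same trick pushes an equivalence of fractions into `D`.
As morphisms of both localizations are classes of left fractions, `Ψ` is fully faithful; it is
essentially surjective because every object of `C` becomes isomorphic to one of `D` in `C[S⁻¹]`.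
Condition (b_L) is the dual one. Being induced by the exact functor `D ⥤ C ⥤ C[S⁻¹]`, `Ψ` is exact,
and so is every quasi-inverse of an exact equivalence.
-/

namespace CategoryTheory

lemma Functor.isEquivalence_of_op {C₁ C₂ : Type*} [Category C₁] [Category C₂] (F : C₁ ⥤ C₂)
    [F.op.IsEquivalence] : F.IsEquivalence :=
  inferInstanceAs (opOp C₁ ⋙ F.op.leftOp).IsEquivalence

lemma Functor.nonempty_fullyFaithful_of_map_bijective {C₁ D₁ D₂ : Type*} [Category C₁]
    [Category D₁] [Category D₂] (L : C₁ ⥤ D₁) [L.EssSurj] (G : D₁ ⥤ D₂)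
    (h : ∀ X Y : C₁, Function.Bijective (G.map : (L.obj X ⟶ L.obj Y) → _)) :
    Nonempty G.FullyFaithful := by
  rw [Functor.FullyFaithful.nonempty_iff_map_bijective]
  intro X Y
  let α := L.objObjPreimageIso X
  let β := L.objObjPreimageIso Y
  have : (G.map : (X ⟶ Y) → _) =
      (G.mapIso α).homCongr (G.mapIso β) ∘ G.map ∘ (α.homCongr β).symm := by
    funext f
    simp
  rw [this]
  exact (Equiv.bijective _).comp ((h _ _).comp (Equiv.bijective _))

namespace LocalizerMorphism

open MorphismProperty

variable {C₁ C₂ D₁ D₂ : Type*} [Category C₁] [Category C₂] [Category D₁] [Category D₂]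
  {W₁ : MorphismProperty C₁} {W₂ : MorphismProperty C₂} (Φ : LocalizerMorphism W₁ W₂)

def mapLeftFraction {X Y : C₁} (ψ : W₁.LeftFraction X Y) :
    W₂.LeftFraction (Φ.functor.obj X) (Φ.functor.obj Y) :=
  ⟨Φ.functor.map ψ.f, Φ.functor.map ψ.s, Φ.map _ ψ.hs⟩

lemma map_leftFraction_map (L₁ : C₁ ⥤ D₁) (L₂ : C₂ ⥤ D₂) [L₁.IsLocalization W₁]
    [L₂.IsLocalization W₂] (G : D₁ ⥤ D₂) [CatCommSq Φ.functor L₁ L₂ G] {X Y : C₁}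
    (ψ : W₁.LeftFraction X Y) :
    G.map (ψ.map L₁ (Localization.inverts L₁ W₁)) =
      ((CatCommSq.iso Φ.functor L₁ L₂ G).app X).homCongr
        ((CatCommSq.iso Φ.functor L₁ L₂ G).app Y)
        ((Φ.mapLeftFraction ψ).map L₂ (Localization.inverts L₂ W₂)) := by
  have hs := (CatCommSq.iso Φ.functor L₁ L₂ G).hom.naturality ψ.s
  have hf := (CatCommSq.iso Φ.functor L₁ L₂ G).hom.naturality ψ.f
  dsimp at hs hf
  have hΦψ : (Φ.mapLeftFraction ψ).map L₂ (Localization.inverts L₂ W₂) ≫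
      L₂.map (Φ.functor.map ψ.s) = L₂.map (Φ.functor.map ψ.f) :=
    (Φ.mapLeftFraction ψ).map_comp_map_s L₂ (Localization.inverts L₂ W₂)
  have := Localization.inverts L₁ W₁ _ ψ.hs
  -- after composing with the isomorphism `G.map (L₁.map ψ.s)` both sides are `G.map (L₁.map ψ.f)`
  rw [Iso.homCongr_apply, ← cancel_mono (G.map (L₁.map ψ.s)), ← G.map_comp, ψ.map_comp_map_s,
    Iso.app_hom, Iso.app_inv, Category.assoc, Category.assoc, ← hs, reassoc_of% hΦψ, hf,
    Iso.inv_hom_id_app_assoc]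

section

variable [W₂.IsStableUnderComposition] [Φ.functor.Full] [Φ.IsInduced] [Φ.HasRightResolutions]

lemma exists_leftFractionRel_mapLeftFraction {X Y : C₁}
    (φ : W₂.LeftFraction (Φ.functor.obj X) (Φ.functor.obj Y)) :
    ∃ ψ : W₁.LeftFraction X Y, LeftFractionRel (Φ.mapLeftFraction ψ) φ := by
  have R : Φ.RightResolution φ.Y' := Classical.arbitrary _
  have hs : W₂ (φ.s ≫ R.w) := W₂.comp_mem _ _ φ.hs R.hw
  refine ⟨⟨Φ.functor.preimage (φ.f ≫ R.w), Φ.functor.preimage (φ.s ≫ R.w), ?_⟩,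
    _, 𝟙 _, R.w, ?_, ?_, ?_⟩
  all_goals simp [mapLeftFraction, ← Φ.inverseImage_eq, hs]

lemma leftFractionRel_of_mapLeftFraction [Φ.functor.Faithful] {X Y : C₁}
    {ψ₁ ψ₂ : W₁.LeftFraction X Y}
    (h : LeftFractionRel (Φ.mapLeftFraction ψ₁) (Φ.mapLeftFraction ψ₂)) :
    LeftFractionRel ψ₁ ψ₂ := by
  obtain ⟨Z, t₁, t₂, hs, hf, ht⟩ := h
  dsimp only [mapLeftFraction] at t₁ t₂ hs hf ht
  have R : Φ.RightResolution Z := Classical.arbitrary _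
  refine ⟨_, Φ.functor.preimage (t₁ ≫ R.w), Φ.functor.preimage (t₂ ≫ R.w), ?_, ?_, ?_⟩
  · apply Φ.functor.map_injective
    simpa using hs =≫ R.w
  · apply Φ.functor.map_injective
    simpa using hf =≫ R.w
  · simpa [← Φ.inverseImage_eq] using W₂.comp_mem _ _ ht R.hw

end

section

variable [W₁.HasLeftCalculusOfFractions] [W₂.HasLeftCalculusOfFractions] [Φ.functor.Full]
  [Φ.functor.Faithful] [Φ.IsInduced] [Φ.HasRightResolutions]
  (L₁ : C₁ ⥤ D₁) [L₁.IsLocalization W₁] (G : D₁ ⥤ D₂)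

lemma map_bijective_of_hasRightResolutions (L₂ : C₂ ⥤ D₂) [L₂.IsLocalization W₂]
    [CatCommSq Φ.functor L₁ L₂ G] (X Y : C₁) :
    Function.Bijective (G.map : (L₁.obj X ⟶ L₁.obj Y) → _) := by
  let e := CatCommSq.iso Φ.functor L₁ L₂ G
  refine ⟨fun a b hab => ?_, fun g => ?_⟩
  · obtain ⟨ψ₁, rfl⟩ := Localization.exists_leftFraction L₁ W₁ a
    obtain ⟨ψ₂, rfl⟩ := Localization.exists_leftFraction L₁ W₁ b
    rw [Φ.map_leftFraction_map L₁ L₂ G, Φ.map_leftFraction_map L₁ L₂ G, Equiv.apply_eq_iff_eq,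
      LeftFraction.map_eq_iff] at hab
    exact (LeftFraction.map_eq_iff L₁ W₁ _ _).2 (Φ.leftFractionRel_of_mapLeftFraction hab)
  · obtain ⟨φ, hφ⟩ := Localization.exists_leftFraction L₂ W₂
      (((e.app X).homCongr (e.app Y)).symm g)
    obtain ⟨ψ, hψ⟩ := Φ.exists_leftFractionRel_mapLeftFraction φ
    refine ⟨ψ.map L₁ (Localization.inverts L₁ W₁), ?_⟩
    rw [Φ.map_leftFraction_map L₁ L₂ G, (LeftFraction.map_eq_iff L₂ W₂ _ _).2 hψ, ← hφ,
      Equiv.apply_symm_apply]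

lemma isEquivalence_of_hasRightResolutions (L₂ : C₂ ⥤ D₂) [L₂.IsLocalization W₂]
    [CatCommSq Φ.functor L₁ L₂ G] : G.IsEquivalence := by
  have := Localization.essSurj L₁ W₁
  obtain ⟨hG⟩ := Functor.nonempty_fullyFaithful_of_map_bijective L₁ G
    (Φ.map_bijective_of_hasRightResolutions L₁ G L₂)
  have := Φ.essSurj_of_hasRightResolutions L₂
  exact { full := hG.full, faithful := hG.faithful, essSurj := ⟨fun Y => ⟨_,
    ⟨((CatCommSq.iso Φ.functor L₁ L₂ G).app _).symm ≪≫
      (Φ.functor ⋙ L₂).objObjPreimageIso Y⟩⟩⟩ }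

lemma isLocalizedEquivalence_of_hasRightResolutions : Φ.IsLocalizedEquivalence :=
  have := Φ.isEquivalence_of_hasRightResolutions W₁.Q (Φ.localizedFunctor W₁.Q W₂.Q) W₂.Q
  IsLocalizedEquivalence.mk' Φ W₁.Q W₂.Q (Φ.localizedFunctor W₁.Q W₂.Q)

end

lemma isLocalizedEquivalence_of_op [Φ.op.IsLocalizedEquivalence] : Φ.IsLocalizedEquivalence := by
  let G := Φ.localizedFunctor W₁.Q W₂.Q
  let : CatCommSq Φ.op.functor W₁.Q.op W₂.Q.op G.op :=
    ⟨NatIso.op (CatCommSq.iso Φ.functor W₁.Q W₂.Q G).symm⟩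
  have := Φ.op.isEquivalence W₁.Q.op W₂.Q.op G.op
  have := G.isEquivalence_of_op
  exact IsLocalizedEquivalence.mk' Φ W₁.Q W₂.Q G

lemma isLocalizedEquivalence_of_hasLeftResolutions [W₁.HasRightCalculusOfFractions]
    [W₂.HasRightCalculusOfFractions] [Φ.functor.Full] [Φ.functor.Faithful] [Φ.IsInduced]
    [Φ.HasLeftResolutions] : Φ.IsLocalizedEquivalence :=
  have := Φ.op.isLocalizedEquivalence_of_hasRightResolutions
  Φ.isLocalizedEquivalence_of_op

end LocalizerMorphism

end CategoryTheory

lemma isTriangulatedSubcategory_univ : IsTriangulatedSubcategory (Set.univ : Set C) where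
  zero := trivial
  sum _ _ _ _ _ _ := trivial
  shift _ _ := trivial
  unshift _ _ := trivial
  cone T _ _ _ := ⟨T.obj₃, trivial, ⟨Iso.refl _⟩⟩

lemma isExactFunctor_of_Q_comp_iso (W : MorphismProperty C) [W.HasLeftCalculusOfFractions]
    [W.IsCompatibleWithTriangulation] (F : C ⥤ D) [F.CommShift ℤ] [F.IsTriangulated]
    (G : W.Localization ⥤ D) (e : W.Q ⋙ G ≅ F) : IsExactFunctor G := by
  let : Localization.Lifting W.Q W F G := ⟨e⟩
  let : G.CommShift ℤ := Functor.commShiftOfLocalization W.Q W ℤ F G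
  have := Localization.essSurj_mapArrow W.Q W
  exact ⟨_, Functor.isTriangulated_of_precomp_iso (Localization.Lifting.iso W.Q W F G)⟩

lemma IsExactFunctor.of_quasiInverse {F : C ⥤ D} {G : D ⥤ C} (hF : IsExactFunctor F)
    (η : F ⋙ G ≅ 𝟭 C) (ε : G ⋙ F ≅ 𝟭 D) : IsExactFunctor G := by
  obtain ⟨hFshift, hF⟩ := hF
  let E : C ≌ D := .mk F G η.symm ε
  let : E.functor.CommShift ℤ := hFshift
  let := E.commShiftInverse ℤ
  have := E.commShift_of_functor ℤ
  have := Equivalence.IsTriangulated.mk' E hF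
  exact ⟨E.commShiftInverse ℤ, inferInstanceAs E.inverse.IsTriangulated⟩

/-- A1.3.2: if `D` is a full triangulated subcategory of `C` (with the induced
triangulated structure and the induced S-system `S_D = S ∩ Hom(D)`) satisfying condition
(b_R) or (b_L), then the natural functor `Ψ : D[S_D⁻¹] ⥤ C[S⁻¹]` is fully faithful, its
essential image is a triangulated subcategory of `C[S⁻¹]`, and `Ψ` is an equivalence of
categories all of whose quasi-inverses are exact. -/
theorem localization_of_adapted_subcategory (S : MorphismProperty C) [SSystem S]
    (Dsub : Set C) (hD : IsTriangulatedSubcategory Dsub)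
    [HasZeroObject (ObjectProperty.FullSubcategory (· ∈ Dsub))]
    [HasShift (ObjectProperty.FullSubcategory (· ∈ Dsub)) ℤ]
    [Preadditive (ObjectProperty.FullSubcategory (· ∈ Dsub))]
    [∀ n : ℤ, (shiftFunctor (ObjectProperty.FullSubcategory (· ∈ Dsub)) n).Additive]
    [Pretriangulated (ObjectProperty.FullSubcategory (· ∈ Dsub))]
    [(ObjectProperty.ι (· ∈ Dsub)).CommShift ℤ]
    -- the triangulated structure on the subcategory is the one induced from `C`:
    (hind : ∀ T : Triangle (ObjectProperty.FullSubcategory (· ∈ Dsub)),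
      (T ∈ distTriang (ObjectProperty.FullSubcategory (· ∈ Dsub))) ↔
        ((ObjectProperty.ι (· ∈ Dsub)).mapTriangle.obj T ∈ distTriang C))
    -- the induced S-system `S_D = S ∩ Hom(D)`:
    (SD : MorphismProperty (ObjectProperty.FullSubcategory (· ∈ Dsub)))
    (hSD : ∀ ⦃X Y : ObjectProperty.FullSubcategory (· ∈ Dsub)⦄ (f : X ⟶ Y),
      SD f ↔ S ((ObjectProperty.ι (· ∈ Dsub)).map f))
    [SSystem SD]
    -- condition (b_R) or (b_L):
    (hb : (∀ X : C, ∃ M ∈ Dsub, ∃ s : X ⟶ M, S s) ∨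
          (∀ X : C, ∃ M ∈ Dsub, ∃ s : M ⟶ X, S s))
    -- the natural functor `Ψ : D[S_D⁻¹] ⥤ C[S⁻¹]`:
    (Ψ : SD.Localization ⥤ S.Localization)
    (hΨ : SD.Q ⋙ Ψ = ObjectProperty.ι (· ∈ Dsub) ⋙ S.Q) :
    (Ψ.Full ∧ Ψ.Faithful) ∧
    IsTriangulatedSubcategory {Y : S.Localization | ∃ X, Nonempty (Ψ.obj X ≅ Y)} ∧
    Ψ.IsEquivalence ∧
    (∀ Ginv : S.Localization ⥤ SD.Localization,
      Nonempty (Ψ ⋙ Ginv ≅ 𝟭 SD.Localization) → Nonempty (Ginv ⋙ Ψ ≅ 𝟭 S.Localization) →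
        IsExactFunctor Ginv) := by
  let ι := ObjectProperty.ι (· ∈ Dsub)
  have hW : SD = S.inverseImage ι := by
    ext X Y f
    exact hSD f
  let Φ : LocalizerMorphism SD S := .ofEq hW
  have : Φ.IsInduced := ⟨hW.symm⟩
  have : Φ.functor.Full := inferInstanceAs ι.Full
  have : Φ.functor.Faithful := inferInstanceAs ι.Faithful
  have : Φ.IsLocalizedEquivalence := by
    rcases hb with hb | hb
    · have : Φ.HasRightResolutions := fun X => by
        obtain ⟨M, hM, s, hs⟩ := hb X
        exact ⟨{ X₁ := ⟨M, hM⟩, w := s, hw := hs }⟩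
      exact Φ.isLocalizedEquivalence_of_hasRightResolutions
    · have : Φ.HasLeftResolutions := fun X => by
        obtain ⟨M, hM, s, hs⟩ := hb X
        exact ⟨{ X₁ := ⟨M, hM⟩, w := s, hw := hs }⟩
      exact Φ.isLocalizedEquivalence_of_hasLeftResolutions
  have : CatCommSq Φ.functor SD.Q S.Q Ψ := ⟨eqToIso hΨ.symm⟩
  have : Ψ.IsEquivalence := Φ.isEquivalence SD.Q S.Q Ψ
  have : ι.IsTriangulated := ⟨fun T hT => (hind T).1 hT⟩
  have hΨexact := isExactFunctor_of_Q_comp_iso SD (ι ⋙ S.Q) Ψ (eqToIso hΨ)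
  have hessImage : {Y : S.Localization | ∃ X, Nonempty (Ψ.obj X ≅ Y)} = Set.univ :=
    Set.eq_univ_of_forall (Functor.EssSurj.mem_essImage Ψ)
  exact ⟨⟨inferInstance, inferInstance⟩, hessImage ▸ isTriangulatedSubcategory_univ,
    inferInstance, fun _ ⟨η⟩ ⟨ε⟩ => hΨexact.of_quasiInverse η ε⟩
end

section
/- Let C be a triangulated category, S an S-system in C, and Q : C → C[S⁻¹] the localization functor. For an object P of C the following are equivalent: (1) Hom_C(P, X) = 0 for every S-acyclic object X (every X with Q(X) ≅ 0); (2) every morphism s : X → P in S admits a morphism t : P → X with s ∘ t = 1_P; (3) for every object X of C, the natural map Hom_C(P, X) → Hom_{C[S⁻¹]}(P, X) induced by Q is a bijection; (4) for every morphism f : P → Y and every s : X → Y in S, there is a unique g : P → X with f = s ∘ g. -/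
open CategoryTheory Limits Pretriangulated ZeroObject

universe v u

variable {C : Type u} [Category.{v} C] [HasZeroObject C] [HasShift C ℤ] [Preadditive C]
  [∀ n : ℤ, (shiftFunctor C n).Additive] [Pretriangulated C]

/-!
A morphism `s : X ⟶ P` in `S` sits in a distinguished triangle `X ⟶ P ⟶ Z ⟶ X⟦1⟧` whose cone
`Z` is `S`-acyclic, so if `P` has no nonzero maps to acyclic objects then `P ⟶ Z` vanishes,
`s` is an epimorphism, and hence split. Sections of the morphisms of `S` landing in `P` turn
every right fraction `P ← P' ⟶ X` into an honest morphism, which gives (3); postcomposition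
with `s ∈ S` is then bijective on maps out of `P` because `Q(s)` is invertible. Finally, by
saturation `0 ⟶ X` lies in `S` whenever `X` is acyclic, so lifting along it forces every
`P ⟶ X` to factor through `0`.
-/

lemma exists_section_of_isIso_map {D : Type*} [Category D] [HasZeroObject D] [HasShift D ℤ]
    [Preadditive D] [∀ n : ℤ, (shiftFunctor D n).Additive] [Pretriangulated D]
    (L : C ⥤ D) [L.CommShift ℤ] [L.IsTriangulated] {X P : C} (s : X ⟶ P) [IsIso (L.map s)]
    (hP : ∀ Z : C, IsZero (L.obj Z) → ∀ f : P ⟶ Z, f = 0) :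
    ∃ t : P ⟶ X, t ≫ s = 𝟙 P := by
  obtain ⟨Z, g, _, hT⟩ := distinguished_cocone_triangle s
  have hZ : IsZero (L.obj Z) :=
    Triangle.isZero₃_of_isIso₁ _ (L.map_distinguished _ hT) (inferInstanceAs (IsIso (L.map s)))
  have : Epi s := Triangle.epi₁ _ hT (hP Z hZ g)
  have := isSplitEpi_of_epi s
  exact ⟨section_ s, IsSplitEpi.id s⟩

section Localization

variable {C' D : Type*} [Category C'] [Category D]

lemma CategoryTheory.MorphismProperty.isColocal_iff_existsUnique_lift (W : MorphismProperty C') (P : C') :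
    W.isColocal P ↔
      ∀ (X Y : C') (f : P ⟶ Y) (s : X ⟶ Y), W s → ∃! g : P ⟶ X, f = g ≫ s := by
  simp only [isColocal_iff, Function.bijective_iff_existsUnique, eq_comm]
  exact ⟨fun h X Y f s hs ↦ h s hs f, fun h X Y s hs f ↦ h X Y f s hs⟩

lemma map_bijective_of_forall_exists_section (L : C' ⥤ D) (W : MorphismProperty C')
    [L.IsLocalization W] [W.HasRightCalculusOfFractions] {P : C'}
    (hP : ∀ ⦃X : C'⦄ (s : X ⟶ P), W s → ∃ t : P ⟶ X, t ≫ s = 𝟙 P) (X : C') :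
    Function.Bijective (L.map : (P ⟶ X) → _) := by
  refine ⟨fun f₁ f₂ hf ↦ ?_, fun φ ↦ ?_⟩
  · obtain ⟨_, s, hs, eq⟩ := (MorphismProperty.map_eq_iff_precomp L W f₁ f₂).1 hf
    obtain ⟨t, ht⟩ := hP s hs
    simpa only [← Category.assoc, ht, Category.id_comp] using t ≫= eq
  · obtain ⟨ψ, rfl⟩ := Localization.exists_rightFraction L W φ
    obtain ⟨t, ht⟩ := hP ψ.s ψ.hs
    have := Localization.inverts L W _ ψ.hs
    have htL : L.map t = inv (L.map ψ.s) :=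
      IsIso.eq_inv_of_inv_hom_id (by rw [← L.map_comp, ht, L.map_id])
    exact ⟨t ≫ ψ.f, by simp [MorphismProperty.RightFraction.map, htL]⟩

lemma isColocal_of_map_bijective (L : C' ⥤ D) (W : MorphismProperty C')
    (hW : W.IsInvertedBy L) {P : C'} (hP : ∀ X : C', Function.Bijective (L.map : (P ⟶ X) → _)) :
    W.isColocal P := by
  intro Y Z g hg
  have : IsIso (L.map g) := hW g hg
  rw [← Function.Bijective.of_comp_iff' (hP Z)]
  convert (asIso (L.map g)).homToEquiv.bijective.comp (hP Y) using 1
  ext f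
  simp

end Localization

lemma SSystem.mem_of_isZero (S : MorphismProperty C) [SSystem S] {X Y : C} (f : X ⟶ Y)
    (hX : IsZero (S.Q.obj X)) (hY : IsZero (S.Q.obj Y)) : S f :=
  (SSystem.saturated f).2 (hX.isIso hY _)

lemma SSystem.eq_zero_of_isColocal (S : MorphismProperty C) [SSystem S] {P X : C}
    (hP : S.isColocal P) (hX : IsZero (S.Q.obj X)) (f : P ⟶ X) : f = 0 := by
  have hs : S (0 : (0 : C) ⟶ X) := SSystem.mem_of_isZero S _ (S.Q.map_isZero (isZero_zero C)) hX
  obtain ⟨g, rfl⟩ := (hP _ hs).2 f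
  exact comp_zero

/-- A1.4.1: characterizations of `S`-projective objects.  For an object `P` the
following are equivalent: (1) every morphism from `P` to an `S`-acyclic object is zero;
(2) every `s : X ⟶ P` in `S` admits a section `t` with `s ∘ t = 1`; (3) for every
`X`, the natural map `Hom_C(P, X) → Hom_{C[S⁻¹]}(P, X)` is bijective; (4) morphisms
from `P` lift uniquely along morphisms of `S`. -/
theorem sProjective_tfae (S : MorphismProperty C) [SSystem S] (P : C) :
    List.TFAE [
      ∀ X : C, IsZero (S.Q.obj X) → ∀ f : P ⟶ X, f = 0,
      ∀ (X : C) (s : X ⟶ P), S s → ∃ t : P ⟶ X, t ≫ s = 𝟙 P,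
      ∀ X : C, Function.Bijective (fun f : P ⟶ X => S.Q.map f),
      ∀ (X Y : C) (f : P ⟶ Y) (s : X ⟶ Y), S s → ∃! g : P ⟶ X, f = g ≫ s] := by
  rw [← S.isColocal_iff_existsUnique_lift P]
  tfae_have 1 → 2 := fun h1 X s hs ↦
    have := Localization.inverts S.Q S s hs
    exists_section_of_isIso_map S.Q s h1
  tfae_have 2 → 3 := fun h2 ↦ map_bijective_of_forall_exists_section S.Q S h2
  tfae_have 3 → 4 := isColocal_of_map_bijective S.Q S (Localization.inverts S.Q S)
  tfae_have 4 → 1 := fun hP _ ↦ SSystem.eq_zero_of_isColocal S hP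
  tfae_finish
end
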